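/- arXiv:math/0601472 — 2 statements merged into one kernel-verified Lean document; each statement's English description precedes it below -/
import Mathlib

section
/- (Quantum Chu–Vandermonde formula) For integers k and r with 0 ≤ k ≤ r, the identity ∑_{l=0}^{k} (-1)^l v^{l(r-k+1)} [T; k choose l] [T; r+k-l choose k-l] = v^{-k^2} T^{-k} [r choose k] holds in Q(v)[T, T^{-1}], where [T; m choose j] = [T;m]_{(j)}/[j]!. -/
noncomputable section

open Finset

/-- The field `ℚ(v)` of rational functions, with `v` an indeterminate. -/
abbrev Fv : Type := RatFunc ℚ

/-- The indeterminate `v`. -/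
def vv : Fv := RatFunc.X

/-- Quantum integer `[m] = (v^m - v^{-m})/(v - v^{-1})`. -/
def qint (m : ℤ) : Fv := (vv ^ m - vv ^ (-m)) / (vv - vv⁻¹)

/-- Quantum factorial `[n]! = [n][n-1]⋯[1]`, with `[0]! = 1`. -/
def qfact (n : ℕ) : Fv := ∏ i ∈ Finset.range n, qint (i + 1)

/-- Falling quantum factorial `[m]_{(j)} = [m][m-1]⋯[m-j+1]`, defined for any integer `m`. -/
def qfall (m : ℤ) (j : ℕ) : Fv := ∏ i ∈ Finset.range j, qint (m - i)

/-- Quantum binomial coefficient `[m choose j] = [m]_{(j)}/[j]!`, for any integer `m`. -/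
def qbinom (m : ℤ) (j : ℕ) : Fv := qfall m j / qfact j


lemma vv_ne_zero : vv ≠ 0 := RatFunc.X_ne_zero

lemma vv_pow_ne_one {z : ℤ} (hz : z ≠ 0) : vv ^ z ≠ 1 := by
  have key : ∀ n : ℕ, n ≠ 0 → vv ^ (n : ℤ) ≠ 1 := by
    intro n hn h
    rw [zpow_natCast] at h
    have : (Polynomial.X : Polynomial ℚ) ^ n = 1 := by
      apply RatFunc.algebraMap_injective
      rw [map_pow, map_one, RatFunc.algebraMap_X]
      exact h
    have := congrArg (Polynomial.eval 0) this
    simp [Polynomial.eval_pow, zero_pow hn] at this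
  rcases lt_or_gt_of_ne hz with h | h
  · intro he
    refine key (-z).toNat (by omega) ?_
    rw [Int.toNat_of_nonneg (by omega)]
    rw [zpow_neg, he, inv_one]
  · intro he
    refine key z.toNat (by omega) ?_
    rwa [Int.toNat_of_nonneg (by omega)]

lemma vv_sub_inv_ne_zero : vv - vv⁻¹ ≠ 0 := by
  rw [sub_ne_zero]
  intro h
  have : vv ^ (2:ℤ) = 1 := by
    rw [zpow_two]
    nth_rewrite 2 [h]
    exact mul_inv_cancel₀ vv_ne_zero
  exact vv_pow_ne_one (by norm_num) this

lemma qint_zero : qint 0 = 0 := by simp [qint]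

lemma qint_ne_zero {m : ℤ} (hm : m ≠ 0) : qint m ≠ 0 := by
  apply div_ne_zero _ vv_sub_inv_ne_zero
  rw [sub_ne_zero]
  intro h
  have : vv ^ (2*m) = 1 := by
    rw [two_mul, zpow_add₀ vv_ne_zero]
    nth_rewrite 1 [h]
    rw [← zpow_add₀ vv_ne_zero]
    simp
  exact vv_pow_ne_one (by omega) this

lemma qfact_ne_zero (n : ℕ) : qfact n ≠ 0 := by
  apply Finset.prod_ne_zero_iff.2
  intro i _
  exact qint_ne_zero (by omega)

lemma qbinom_zero (m : ℤ) : qbinom m 0 = 1 := by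
  simp [qbinom, qfall, qfact]

lemma qbinom_zero_top (l : ℕ) : qbinom 0 (l + 1) = 0 := by
  rw [qbinom, qfall]
  rw [Finset.prod_eq_zero (Finset.mem_range.2 (Nat.succ_pos l))]
  · simp
  · simpa using qint_zero

lemma qint_split (m j : ℤ) :
    qint m = vv ^ (-j) * qint (m - j) + vv ^ (m - j) * qint j := by
  rw [qint, qint, qint]
  rw [← mul_div_assoc, ← mul_div_assoc, ← add_div]
  congr 1
  rw [mul_sub, mul_sub, ← zpow_add₀ vv_ne_zero, ← zpow_add₀ vv_ne_zero,
    ← zpow_add₀ vv_ne_zero, ← zpow_add₀ vv_ne_zero]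
  have e1 : -j + (m - j) = m - 2*j := by ring
  have e2 : -j + -(m - j) = -m := by ring
  have e3 : m - j + j = m := by ring
  have e4 : m - j + -j = m - 2*j := by ring
  rw [e1, e2, e3, e4]
  ring

lemma qfall_succ_left (m : ℤ) (j : ℕ) : qfall m (j + 1) = qint m * qfall (m - 1) j := by
  rw [qfall, Finset.prod_range_succ', qfall]
  rw [mul_comm]
  congr 1
  · simp
  · apply Finset.prod_congr rfl
    intro i _
    congr 1
    push_cast
    ring

lemma qfall_succ_right (m : ℤ) (j : ℕ) : qfall m (j + 1) = qfall m j * qint (m - j) := by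
  rw [qfall, Finset.prod_range_succ, qfall]

lemma qfact_succ (j : ℕ) : qfact (j + 1) = qfact j * qint (j + 1) := by
  rw [qfact, Finset.prod_range_succ, qfact]

lemma qbinom_pascal (m : ℤ) (j : ℕ) :
    qbinom m (j + 1) =
      vv ^ (-((j : ℤ) + 1)) * qbinom (m - 1) (j + 1) + vv ^ (m - (j + 1)) * qbinom (m - 1) j := by
  have h1 : qfall m (j + 1) =
      vv ^ (-((j : ℤ) + 1)) * qfall (m - 1) (j + 1)
        + vv ^ (m - ((j : ℤ) + 1)) * (qint ((j : ℤ) + 1) * qfall (m - 1) j) := by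
    rw [qfall_succ_left, qint_split m ((j : ℤ) + 1)]
    have h2 : qfall (m - 1) (j + 1) = qfall (m - 1) j * qint (m - ((j : ℤ) + 1)) := by
      rw [qfall_succ_right]
      congr 1
      ring
    rw [h2]
    ring
  rw [qbinom, qbinom, qbinom, h1, qfact_succ]
  have hj : qint ((j : ℤ) + 1) ≠ 0 := qint_ne_zero (by omega)
  have hf : qfact j ≠ 0 := qfact_ne_zero j
  field_simp

def Sg (k r : ℕ) (n : ℤ) : Fv :=
  ∑ l ∈ Finset.range (k + 1),
    (-1) ^ l * vv ^ ((l : ℤ) * ((r : ℤ) - k + 1)) * qbinom (n + k) l *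
      qbinom (n + ((r : ℤ) + k - l)) (k - l)

lemma Sg_base (k r : ℕ) : Sg k r (-(k : ℤ)) = qbinom r k := by
  rw [Sg]
  rw [Finset.sum_eq_single_of_mem 0 (Finset.mem_range.2 (Nat.succ_pos k))]
  · have h0 : (-(k:ℤ) + k) = 0 := by ring
    have h1 : (-(k:ℤ) + ((r : ℤ) + k - ((0:ℕ):ℤ))) = r := by push_cast; ring
    rw [h0, h1]
    simp [qbinom_zero]
  · intro l _ hl
    obtain ⟨l', rfl⟩ := Nat.exists_eq_succ_of_ne_zero hl
    have h0 : (-(k:ℤ) + k) = 0 := by ring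
    rw [h0, qbinom_zero_top]
    ring

section step

variable (k r : ℕ) (n : ℤ)

def cc (l : ℕ) : Fv := (-1) ^ l * vv ^ ((l : ℤ) * ((r : ℤ) - k + 1))
def AA (l : ℕ) : Fv := qbinom (n + k) l
def BB (l : ℕ) : Fv := qbinom (n + ((r : ℤ) + k - l)) (k - l)
def AAp : ℕ → Fv
  | 0 => 0
  | l + 1 => qbinom (n + k) l
def BBp (l : ℕ) : Fv :=
  if l < k then qbinom (n + ((r : ℤ) + k - l)) (k - l - 1) else 0

lemma Sg_eq : Sg k r n = ∑ l ∈ Finset.range (k + 1), cc k r l * AA k n l * BB k r n l := rfl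

lemma stepA (l : ℕ) :
    AA k (n + 1) l = vv ^ (-(l : ℤ)) * AA k n l + vv ^ (n + 1 + (k : ℤ) - l) * AAp k n l := by
  cases l with
  | zero => simp [AA, AAp, qbinom_zero]
  | succ l =>
    show qbinom ((n + 1) + k) (l + 1) = _
    rw [qbinom_pascal]
    have h1 : (n + 1 + (k : ℤ)) - 1 = n + k := by ring
    rw [h1]
    show _ = vv ^ (-((l + 1 : ℕ) : ℤ)) * qbinom (n + k) (l + 1) +
        vv ^ (n + 1 + (k : ℤ) - ((l + 1 : ℕ) : ℤ)) * qbinom (n + k) l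
    push_cast
    ring

lemma stepB (l : ℕ) (hl : l ≤ k) :
    BB k r (n + 1) l =
      vv ^ (-((k : ℤ) - l)) * BB k r n l + vv ^ (n + 1 + (r : ℤ)) * BBp k r n l := by
  rcases eq_or_lt_of_le hl with h | h
  · subst h
    rw [BB, BB, BBp, if_neg (lt_irrefl l)]
    simp [Nat.sub_self, qbinom_zero]
  · obtain ⟨j, hj⟩ : ∃ j, k - l = j + 1 := ⟨k - l - 1, by omega⟩
    have hj' : ((j : ℤ) + 1) = (k : ℤ) - l := by
      have : (k : ℤ) - l = ((k - l : ℕ) : ℤ) := by push_cast [Nat.cast_sub (le_of_lt h)]; ring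
      rw [this, hj]; push_cast; ring
    rw [BB, BB, BBp, if_pos h, hj]
    rw [show j + 1 - 1 = j from rfl]
    rw [qbinom_pascal ((n + 1) + ((r : ℤ) + k - l)) j]
    have h1 : (n + 1 + ((r : ℤ) + k - l)) - 1 = n + ((r : ℤ) + k - l) := by ring
    have e1 : -((j : ℤ) + 1) = -((k : ℤ) - l) := by omega
    have e2 : n + 1 + ((r : ℤ) + k - l) - ((j : ℤ) + 1) = n + 1 + r := by omega
    rw [h1, e1, e2]

lemma cc_succ (l : ℕ) : cc k r (l + 1) = -(vv ^ ((r : ℤ) - k + 1)) * cc k r l := by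
  rw [cc, cc, pow_succ]
  have : ((l + 1 : ℕ) : ℤ) * ((r : ℤ) - k + 1) =
      (l : ℤ) * ((r : ℤ) - k + 1) + ((r : ℤ) - k + 1) := by push_cast; ring
  rw [this, zpow_add₀ vv_ne_zero]
  ring

lemma key3 (l : ℕ) (hl : l < k) :
    vv ^ (n + 1 + (r : ℤ) - l) * BBp k r n l =
      vv ^ (n + (r : ℤ) - k + 2) * BB k r n (l + 1) +
        vv ^ (2 * n + 2 * (r : ℤ) + 2 - l) * BBp k r n (l + 1) := by
  rcases eq_or_lt_of_le (Nat.succ_le_of_lt hl) with h | h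
  · -- l + 1 = k
    rw [BBp, if_pos hl, BBp, if_neg (by omega), BB]
    have h1 : k - l - 1 = 0 := by omega
    have h2 : k - (l + 1) = 0 := by omega
    rw [h1, h2, qbinom_zero, qbinom_zero]
    rw [mul_one, mul_one, mul_zero, add_zero]
    congr 1
    omega
  · -- l + 1 < k
    obtain ⟨j, hj⟩ : ∃ j, k - l - 1 = j + 1 := ⟨k - l - 2, by omega⟩
    rw [BBp, if_pos hl, BBp, if_pos h, BB]
    have h2 : k - (l + 1) = j + 1 := by omega
    have h3 : k - (l + 1) - 1 = j := by omega
    rw [h3, h2, hj]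
    rw [qbinom_pascal (n + ((r : ℤ) + k - l)) j]
    have h4 : n + ((r : ℤ) + k - l) - 1 = n + ((r : ℤ) + k - ((l + 1 : ℕ) : ℤ)) := by
      push_cast; ring
    rw [h4, mul_add]
    rw [← mul_assoc, ← mul_assoc, ← zpow_add₀ vv_ne_zero, ← zpow_add₀ vv_ne_zero]
    have e1 : n + 1 + (r : ℤ) - l + -((j : ℤ) + 1) = n + (r : ℤ) - k + 2 := by omega
    have e2 : n + 1 + (r : ℤ) - l + (n + ((r : ℤ) + k - l) - ((j : ℤ) + 1)) =
        2 * n + 2 * (r : ℤ) + 2 - l := by omega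
    rw [e1, e2]

end step

lemma per_l (k r : ℕ) (n : ℤ) (l : ℕ) (hl : l ≤ k) :
    cc k r l * AA k (n + 1) l * BB k r (n + 1) l =
      vv ^ (-(k : ℤ)) * (cc k r l * AA k n l * BB k r n l)
        + cc k r l * (vv ^ (-(l : ℤ)) * AA k n l) * (vv ^ (n + 1 + (r : ℤ)) * BBp k r n l)
        + cc k r l * (vv ^ (n + 1 + (k : ℤ) - l) * AAp k n l) *
            (vv ^ (-((k : ℤ) - l)) * BB k r n l)
        + cc k r l * (vv ^ (n + 1 + (k : ℤ) - l) * AAp k n l) *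
            (vv ^ (n + 1 + (r : ℤ)) * BBp k r n l) := by
  rw [stepA, stepB k r n l hl]
  have h1 : vv ^ (-(l : ℤ)) * vv ^ (-((k : ℤ) - l)) = vv ^ (-(k : ℤ)) := by
    rw [← zpow_add₀ vv_ne_zero]; congr 1; ring
  linear_combination (cc k r l * AA k n l * BB k r n l) * h1

lemma term_zero (k r : ℕ) (n : ℤ) (l : ℕ) (hl : l < k) :
    cc k r l * (vv ^ (-(l : ℤ)) * AA k n l) * (vv ^ (n + 1 + (r : ℤ)) * BBp k r n l)
      + cc k r (l + 1) * (vv ^ (n + 1 + (k : ℤ) - (l + 1 : ℕ)) * AAp k n (l + 1)) *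
          (vv ^ (-((k : ℤ) - (l + 1 : ℕ))) * BB k r n (l + 1))
      + cc k r (l + 1) * (vv ^ (n + 1 + (k : ℤ) - (l + 1 : ℕ)) * AAp k n (l + 1)) *
          (vv ^ (n + 1 + (r : ℤ)) * BBp k r n (l + 1)) = 0 := by
  have hA : AAp k n (l + 1) = AA k n l := rfl
  have hkey := key3 k r n l hl
  have hc := cc_succ k r l
  rw [hA, hc]
  have c1 : vv ^ (-(l : ℤ)) * vv ^ (n + 1 + (r : ℤ)) = vv ^ (n + 1 + (r : ℤ) - l) := by
    rw [← zpow_add₀ vv_ne_zero]; congr 1; ring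
  have c2 : (vv ^ ((r : ℤ) - k + 1) * vv ^ (n + 1 + (k : ℤ) - ((l + 1 : ℕ) : ℤ))) *
      vv ^ (-((k : ℤ) - ((l + 1 : ℕ) : ℤ))) = vv ^ (n + (r : ℤ) - k + 2) := by
    rw [← zpow_add₀ vv_ne_zero, ← zpow_add₀ vv_ne_zero]; congr 1; push_cast; ring
  have c3 : (vv ^ ((r : ℤ) - k + 1) * vv ^ (n + 1 + (k : ℤ) - ((l + 1 : ℕ) : ℤ))) *
      vv ^ (n + 1 + (r : ℤ)) = vv ^ (2 * n + 2 * (r : ℤ) + 2 - l) := by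
    rw [← zpow_add₀ vv_ne_zero, ← zpow_add₀ vv_ne_zero]; congr 1; push_cast; ring
  linear_combination (cc k r l * AA k n l) * hkey
    + (cc k r l * AA k n l * BBp k r n l) * c1
    - (cc k r l * AA k n l * BB k r n (l + 1)) * c2
    - (cc k r l * AA k n l * BBp k r n (l + 1)) * c3

lemma Sg_step (k r : ℕ) (n : ℤ) : Sg k r (n + 1) = vv ^ (-(k : ℤ)) * Sg k r n := by
  rw [Sg_eq k r (n + 1)]
  have expand : ∑ l ∈ Finset.range (k + 1), cc k r l * AA k (n + 1) l * BB k r (n + 1) l =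
      (∑ l ∈ Finset.range (k + 1), vv ^ (-(k : ℤ)) * (cc k r l * AA k n l * BB k r n l))
      + (∑ l ∈ Finset.range (k + 1),
          cc k r l * (vv ^ (-(l : ℤ)) * AA k n l) * (vv ^ (n + 1 + (r : ℤ)) * BBp k r n l))
      + (∑ l ∈ Finset.range (k + 1),
          cc k r l * (vv ^ (n + 1 + (k : ℤ) - l) * AAp k n l) *
            (vv ^ (-((k : ℤ) - l)) * BB k r n l))
      + (∑ l ∈ Finset.range (k + 1),
          cc k r l * (vv ^ (n + 1 + (k : ℤ) - l) * AAp k n l) *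
            (vv ^ (n + 1 + (r : ℤ)) * BBp k r n l)) := by
    rw [← Finset.sum_add_distrib, ← Finset.sum_add_distrib, ← Finset.sum_add_distrib]
    apply Finset.sum_congr rfl
    intro l hl
    exact per_l k r n l (by simpa using Nat.lt_succ_iff.mp (Finset.mem_range.mp hl))
  rw [expand]
  rw [← Finset.mul_sum, ← Sg_eq]
  have hS2 : ∑ l ∈ Finset.range (k + 1),
      cc k r l * (vv ^ (-(l : ℤ)) * AA k n l) * (vv ^ (n + 1 + (r : ℤ)) * BBp k r n l) =
      ∑ l ∈ Finset.range k,
        cc k r l * (vv ^ (-(l : ℤ)) * AA k n l) * (vv ^ (n + 1 + (r : ℤ)) * BBp k r n l) := by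
    rw [Finset.sum_range_succ, BBp, if_neg (lt_irrefl k)]
    simp
  have hS3 : ∑ l ∈ Finset.range (k + 1),
      cc k r l * (vv ^ (n + 1 + (k : ℤ) - l) * AAp k n l) *
        (vv ^ (-((k : ℤ) - l)) * BB k r n l) =
      ∑ l ∈ Finset.range k,
        cc k r (l + 1) * (vv ^ (n + 1 + (k : ℤ) - (l + 1 : ℕ)) * AAp k n (l + 1)) *
          (vv ^ (-((k : ℤ) - (l + 1 : ℕ))) * BB k r n (l + 1)) := by
    rw [Finset.sum_range_succ']
    have : AAp k n 0 = 0 := rfl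
    rw [this]
    simp
  have hS4 : ∑ l ∈ Finset.range (k + 1),
      cc k r l * (vv ^ (n + 1 + (k : ℤ) - l) * AAp k n l) *
        (vv ^ (n + 1 + (r : ℤ)) * BBp k r n l) =
      ∑ l ∈ Finset.range k,
        cc k r (l + 1) * (vv ^ (n + 1 + (k : ℤ) - (l + 1 : ℕ)) * AAp k n (l + 1)) *
          (vv ^ (n + 1 + (r : ℤ)) * BBp k r n (l + 1)) := by
    rw [Finset.sum_range_succ']
    have : AAp k n 0 = 0 := rfl
    rw [this]
    simp
  rw [hS2, hS3, hS4, add_assoc, add_assoc, ← Finset.sum_add_distrib, ← Finset.sum_add_distrib]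
  have : ∑ l ∈ Finset.range k,
      (cc k r l * (vv ^ (-(l : ℤ)) * AA k n l) * (vv ^ (n + 1 + (r : ℤ)) * BBp k r n l)
        + (cc k r (l + 1) * (vv ^ (n + 1 + (k : ℤ) - (l + 1 : ℕ)) * AAp k n (l + 1)) *
            (vv ^ (-((k : ℤ) - (l + 1 : ℕ))) * BB k r n (l + 1))
          + cc k r (l + 1) * (vv ^ (n + 1 + (k : ℤ) - (l + 1 : ℕ)) * AAp k n (l + 1)) *
            (vv ^ (n + 1 + (r : ℤ)) * BBp k r n (l + 1)))) = 0 := by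
    apply Finset.sum_eq_zero
    intro l hl
    have := term_zero k r n l (Finset.mem_range.mp hl)
    linear_combination this
  rw [this, add_zero]

lemma Sg_formula (k r : ℕ) (j : ℕ) :
    Sg k r (-(k : ℤ) + j) = vv ^ (-(k : ℤ) * j) * qbinom r k := by
  induction j with
  | zero => simp [Sg_base]
  | succ j ih =>
    have h1 : (-(k : ℤ) + ((j + 1 : ℕ) : ℤ)) = (-(k : ℤ) + j) + 1 := by push_cast; ring
    rw [h1, Sg_step, ih, ← mul_assoc, ← zpow_add₀ vv_ne_zero]
    congr 2
    push_cast; ring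


/-- The Laurent polynomial ring `ℚ(v)[T, T⁻¹]`. -/
abbrev LPT : Type := LaurentPolynomial Fv

/-- `[T; r] = (v^r T - v^{-r} T^{-1})/(v - v^{-1})` in `ℚ(v)[T, T⁻¹]`. -/
def bT (r : ℤ) : LPT :=
  LaurentPolynomial.C (vv ^ r / (vv - vv⁻¹)) * LaurentPolynomial.T 1 -
    LaurentPolynomial.C (vv ^ (-r) / (vv - vv⁻¹)) * LaurentPolynomial.T (-1)

/-- Falling product `[T; r]_{(j)} = [T;r][T;r-1]⋯[T;r-j+1]`, with `[T;r]_{(0)} = 1`. -/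
def bTfall (r : ℤ) (j : ℕ) : LPT := ∏ i ∈ Finset.range j, bT (r - i)

/-- Quantum binomial `[T; m choose j] = [T;m]_{(j)}/[j]!`. -/
def bTbinom (m : ℤ) (j : ℕ) : LPT := bTfall m j * LaurentPolynomial.C (qfact j)⁻¹


open LaurentPolynomial in
def ev (z : ℤ) : LPT →ₐ[Fv] Fv :=
  (AddMonoidAlgebra.lift Fv Fv ℤ)
    ((Units.coeHom Fv).comp (zpowersHom Fvˣ (Units.mk0 vv vv_ne_zero ^ z)))

lemma ev_single (z a : ℤ) (b : Fv) : ev z (AddMonoidAlgebra.single a b) = b * vv ^ (z * a) := by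
  rw [ev]
  rw [AddMonoidAlgebra.lift_single]
  simp only [MonoidHom.coe_comp, Function.comp_apply, Units.coeHom_apply, zpowersHom_apply,
    Units.val_zpow_eq_zpow_val, Units.val_mk0, smul_eq_mul]
  rw [← zpow_mul]
  rfl

lemma ev_C (z : ℤ) (b : Fv) : ev z (LaurentPolynomial.C b) = b := by
  rw [← LaurentPolynomial.single_eq_C, ev_single]
  simp

lemma ev_T (z m : ℤ) : ev z (LaurentPolynomial.T m) = vv ^ (z * m) := by
  rw [LaurentPolynomial.T, ev_single]
  simp

lemma ev_bT (z a : ℤ) : ev z (bT a) = qint (z + a) := by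
  rw [bT, map_sub, map_mul, map_mul, ev_C, ev_C, ev_T, ev_T, qint]
  rw [div_mul_eq_mul_div, div_mul_eq_mul_div, div_sub_div_same,
    ← zpow_add₀ vv_ne_zero, ← zpow_add₀ vv_ne_zero]
  congr 2
  · ring
  · ring

lemma ev_bTfall (z m : ℤ) (j : ℕ) : ev z (bTfall m j) = qfall (z + m) j := by
  rw [bTfall, map_prod, qfall]
  apply Finset.prod_congr rfl
  intro i _
  rw [ev_bT]
  congr 1
  ring

lemma ev_bTbinom (z m : ℤ) (j : ℕ) : ev z (bTbinom m j) = qbinom (z + m) j := by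
  rw [bTbinom, map_mul, ev_C, ev_bTfall, qbinom, div_eq_mul_inv]

lemma vv_zpow_inj : Function.Injective fun z : ℤ => vv ^ z := by
  intro a b h
  simp only at h
  by_contra hne
  have : vv ^ (a - b) = 1 := by
    rw [sub_eq_add_neg, zpow_add₀ vv_ne_zero, h, ← zpow_add₀ vv_ne_zero]
    simp
  exact vv_pow_ne_one (sub_ne_zero.2 hne) this

lemma ev_toLaurent (z : ℤ) (q : Polynomial Fv) :
    ev z (Polynomial.toLaurent q) = Polynomial.eval (vv ^ z) q := by
  have h : ((ev z).toRingHom.comp (Polynomial.toLaurent (R := Fv))) =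
      Polynomial.evalRingHom (vv ^ z) := by
    apply Polynomial.ringHom_ext
    · intro a
      simp [Polynomial.toLaurent_C, ev_C]
    · simp only [RingHom.coe_comp, Function.comp_apply, Polynomial.toLaurent_X,
        Polynomial.evalRingHom, Polynomial.eval_X]
      show ev z (LaurentPolynomial.T 1) = _
      rw [ev_T]
      simp [Polynomial.eval₂_X]
  have := congrArg (fun f => f q) h
  simpa using this

lemma laurent_eq_of_ev (f g : LPT) (h : ∀ m : ℕ, ev (m : ℤ) f = ev (m : ℤ) g) : f = g := by
  have hsub : ∀ m : ℕ, ev (m : ℤ) (f - g) = 0 := by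
    intro m
    rw [map_sub, h m, sub_self]
  suffices hz : f - g = 0 by
    linear_combination hz
  set p := f - g with hp
  obtain ⟨nn, p', hpow⟩ := p.exists_T_pow
  have hroots : ∀ m : ℕ, Polynomial.eval (vv ^ (m : ℤ)) p' = 0 := by
    intro m
    rw [← ev_toLaurent, hpow, map_mul, hsub m, zero_mul]
  have hp' : p' = 0 := by
    by_contra hne
    have hfin := Polynomial.finite_setOf_isRoot hne
    have hsubset : Set.range (fun m : ℕ => vv ^ (m : ℤ)) ⊆ {x | Polynomial.IsRoot p' x} := by
      rintro x ⟨m, rfl⟩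
      exact hroots m
    have hinf : (Set.range (fun m : ℕ => vv ^ (m : ℤ))).Infinite := by
      apply Set.infinite_range_of_injective
      intro a b hab
      exact_mod_cast vv_zpow_inj hab
    exact hinf (hfin.subset hsubset)
  have h0 : p * LaurentPolynomial.T (nn : ℤ) = 0 := by
    rw [← hpow, hp', map_zero]
  have : p = p * LaurentPolynomial.T (nn : ℤ) * LaurentPolynomial.T (-(nn : ℤ)) := by
    rw [mul_assoc, ← LaurentPolynomial.T_add]
    simp [LaurentPolynomial.T_zero]
  rw [this, h0, zero_mul]

/-- Quantum Chu–Vandermonde formula: for `0 ≤ k ≤ r`,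
`∑_{l=0}^{k} (-1)^l v^{l(r-k+1)} [T;k choose l] [T;r+k-l choose k-l] = v^{-k²} T^{-k} [r choose k]`
in `ℚ(v)[T, T⁻¹]`. -/
theorem chu_vandermonde (k r : ℕ) (hk : k ≤ r) :
    ∑ l ∈ Finset.range (k + 1),
        LaurentPolynomial.C ((-1) ^ l * vv ^ ((l : ℤ) * ((r : ℤ) - k + 1))) *
          bTbinom (k : ℤ) l * bTbinom ((r : ℤ) + k - l) (k - l) =
      LaurentPolynomial.C (vv ^ (-(k : ℤ) ^ 2) * qbinom (r : ℤ) k) *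
        LaurentPolynomial.T (-(k : ℤ)) := by
  apply laurent_eq_of_ev
  intro m
  rw [map_sum, map_mul, ev_C, ev_T]
  have hL : ∑ l ∈ Finset.range (k + 1),
      ev (m : ℤ) (LaurentPolynomial.C ((-1) ^ l * vv ^ ((l : ℤ) * ((r : ℤ) - k + 1))) *
        bTbinom (k : ℤ) l * bTbinom ((r : ℤ) + k - l) (k - l)) = Sg k r (m : ℤ) := by
    rw [Sg]
    apply Finset.sum_congr rfl
    intro l _
    rw [map_mul, map_mul, ev_C, ev_bTbinom, ev_bTbinom]
  rw [hL]
  have hS := Sg_formula k r (m + k)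
  have harg : (-(k : ℤ) + ((m + k : ℕ) : ℤ)) = (m : ℤ) := by push_cast; ring
  rw [harg] at hS
  rw [hS]
  have hre : vv ^ (-(k : ℤ) ^ 2) * qbinom (r : ℤ) k * vv ^ ((m : ℤ) * (-(k : ℤ))) =
      (vv ^ (-(k : ℤ) ^ 2) * vv ^ ((m : ℤ) * (-(k : ℤ)))) * qbinom (r : ℤ) k := by ring
  rw [hre, ← zpow_add₀ vv_ne_zero]
  congr 2
  push_cast
  ring
end
end

section
/- (Quantum Clebsch–Gordan highest weight vectors) For nonnegative integers m, n and 0 ≤ p ≤ min(m,n), the vector Φ(u^{(m+n-2p)}) = ∑_{k=0}^{p} (-1)^k v^{(k-p)(m-p-k+1)} ([n-p+k]_{(k)}/[m]_{(k)}) u^{(m)}_k ⊗ u^{(n)}_{p-k} in F_m ⊗ F_n is annihilated by E and has K-weight v^{m+n-2p}. -/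
noncomputable section

open Finset

set_option maxHeartbeats 1000000
set_option synthInstance.maxHeartbeats 800000

/-- The underlying space of the `(m+1)`-dimensional irreducible module `F_m`. -/
abbrev Vm (m : ℕ) : Type := Fin (m + 1) → Fv

/-- The basis vector `u^{(m)}_j = F^{(j)}u^{(m)}` of `F_m` (zero for `j` out of range). -/
def uvec (m : ℕ) (j : ℤ) : Vm m := fun i => if (i : ℤ) = j then 1 else 0

/-- The action of `E` on `F_m`: `E u_j = [m+1-j] u_{j-1}`. -/
def Eop (m : ℕ) : Vm m →ₗ[Fv] Vm m where
  toFun f := fun i =>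
    if h : (i : ℕ) + 1 < m + 1 then qint ((m : ℤ) - i) * f ⟨(i : ℕ) + 1, h⟩ else 0
  map_add' f g := by
    funext i
    simp only [Pi.add_apply, mul_add]
    split_ifs with h <;> simp
  map_smul' c f := by
    funext i
    simp only [Pi.smul_apply, smul_eq_mul, RingHom.id_apply]
    split_ifs with h
    · ring
    · simp

/-- The action of `F` on `F_m`: `F u_j = [j+1] u_{j+1}`. -/
def Fop (m : ℕ) : Vm m →ₗ[Fv] Vm m where
  toFun f := fun i =>
    if h : 0 < (i : ℕ) then qint (i : ℤ) * f ⟨(i : ℕ) - 1, by omega⟩ else 0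
  map_add' f g := by
    funext i
    simp only [Pi.add_apply, mul_add]
    split_ifs with h <;> simp
  map_smul' c f := by
    funext i
    simp only [Pi.smul_apply, smul_eq_mul, RingHom.id_apply]
    split_ifs with h
    · ring
    · simp

/-- The action of `K` on `F_m`: `K u_j = v^{m-2j} u_j`. -/
def Kop (m : ℕ) : Vm m →ₗ[Fv] Vm m where
  toFun f := fun i => vv ^ ((m : ℤ) - 2 * i) * f i
  map_add' f g := by funext i; simp [mul_add]
  map_smul' c f := by
    funext i
    simp only [Pi.smul_apply, smul_eq_mul, RingHom.id_apply]
    ring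

/-- The action of `K⁻¹` on `F_m`: `K⁻¹ u_j = v^{2j-m} u_j`. -/
def Kinvop (m : ℕ) : Vm m →ₗ[Fv] Vm m where
  toFun f := fun i => vv ^ (2 * (i : ℤ) - m) * f i
  map_add' f g := by funext i; simp [mul_add]
  map_smul' c f := by
    funext i
    simp only [Pi.smul_apply, smul_eq_mul, RingHom.id_apply]
    ring

lemma vv_pow_ne_one_s15 {j : ℕ} (hj : j ≠ 0) : vv ^ j ≠ 1 := by
  intro h
  have h2 : (algebraMap (Polynomial ℚ) Fv) (Polynomial.X ^ j) =
      (algebraMap (Polynomial ℚ) Fv) 1 := by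
    simpa [vv, map_pow] using h
  have h3 : (Polynomial.X : Polynomial ℚ) ^ j = 1 := RatFunc.algebraMap_injective ℚ h2
  have h4 := congrArg Polynomial.natDegree h3
  simp [Polynomial.natDegree_X_pow] at h4
  exact hj h4

lemma vv_zpow_ne {a b : ℤ} (h : a ≠ b) : vv ^ a ≠ vv ^ b := by
  wlog hab : b < a generalizing a b
  · exact fun he => this h.symm (by omega) he.symm
  intro he
  have h1 : vv ^ (a - b) = 1 := by
    rw [zpow_sub₀ vv_ne_zero, he, div_self (zpow_ne_zero _ vv_ne_zero)]
  have h2 : vv ^ (a - b).toNat = 1 := by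
    rw [← zpow_natCast, Int.toNat_of_nonneg (by omega)]; exact h1
  exact vv_pow_ne_one_s15 (by omega) h2

lemma qint_ne_zero_s15 {r : ℤ} (hr : 0 < r) : qint r ≠ 0 := by
  unfold qint
  apply div_ne_zero
  · exact sub_ne_zero.mpr (vv_zpow_ne (by omega))
  · have h : vv - vv⁻¹ = vv ^ (1:ℤ) - vv ^ (-1:ℤ) := by
      simp [zpow_neg, zpow_one]
    rw [h]
    exact sub_ne_zero.mpr (vv_zpow_ne (by omega))

lemma uvec_eq_zero {m : ℕ} {j : ℤ} (h : j < 0 ∨ (m:ℤ) < j) : uvec m j = 0 := by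
  funext i
  have hi := i.isLt
  simp only [uvec]
  rw [if_neg (by omega)]
  rfl
lemma Eop_uvec (m : ℕ) (k : ℤ) :
    Eop m (uvec m k) = qint ((m:ℤ) + 1 - k) • uvec m (k - 1) := by
  funext i
  have hi := i.isLt
  simp only [Eop, LinearMap.coe_mk, AddHom.coe_mk, uvec, Pi.smul_apply, smul_eq_mul]
  by_cases h : (i:ℕ) + 1 < m + 1
  · rw [dif_pos h]
    by_cases h2 : (i:ℤ) = k - 1
    · have hik : (((⟨(i:ℕ)+1, h⟩ : Fin (m+1)) : ℕ) : ℤ) = k := by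
        simp only [Fin.val_mk]; push_cast; omega
      rw [if_pos hik, if_pos h2, mul_one, mul_one]
      congr 1; omega
    · have hik : ¬(((⟨(i:ℕ)+1, h⟩ : Fin (m+1)) : ℕ) : ℤ) = k := by
        simp only [Fin.val_mk]; push_cast; omega
      rw [if_neg hik, if_neg h2, mul_zero, mul_zero]
  · rw [dif_neg h]
    by_cases h2 : (i:ℤ) = k - 1
    · have hz : (m:ℤ) + 1 - k = 0 := by omega
      rw [if_pos h2, hz, qint_zero, zero_mul]
    · rw [if_neg h2, mul_zero]

lemma Kop_uvec (m : ℕ) (k : ℤ) :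
    Kop m (uvec m k) = vv ^ ((m:ℤ) - 2*k) • uvec m k := by
  funext i
  simp only [Kop, LinearMap.coe_mk, AddHom.coe_mk, uvec, Pi.smul_apply, smul_eq_mul]
  by_cases h : (i:ℤ) = k
  · rw [if_pos h, h]
  · rw [if_neg h, mul_zero, mul_zero]
lemma qfall_succ (a : ℤ) (j : ℕ) : qfall a (j+1) = qfall a j * qint (a - j) :=
  Finset.prod_range_succ _ _

lemma qfall_succ' (a : ℤ) (j : ℕ) : qfall a (j+1) = qfall (a-1) j * qint a := by
  unfold qfall
  rw [Finset.prod_range_succ']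
  congr 1
  · refine Finset.prod_congr rfl fun i _ => ?_
    congr 1; push_cast; ring
  · congr 1; push_cast; ring
open TensorProduct in
/-- Quantum Clebsch–Gordan highest weight vectors: for `0 ≤ p ≤ min(m,n)`, the vector
`Φ(u^{(m+n-2p)}) = ∑_{k=0}^{p} (-1)^k v^{(k-p)(m-p-k+1)} ([n-p+k]_{(k)}/[m]_{(k)})
u^{(m)}_k ⊗ u^{(n)}_{p-k}` in `F_m ⊗ F_n` is annihilated by `Δ(E) = E⊗1 + K⊗E` and has
`Δ(K) = K⊗K`-weight `v^{m+n-2p}`. -/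
theorem clebsch_gordan_highest_weight (m n p : ℕ) (hp : p ≤ min m n)
    (Φ : Vm m ⊗[Fv] Vm n)
    (hΦ : Φ = ∑ k ∈ Finset.range (p + 1),
      ((-1) ^ k * vv ^ (((k : ℤ) - p) * ((m : ℤ) - p - k + 1)) *
          (qfall ((n : ℤ) - p + k) k / qfall (m : ℤ) k)) •
        (uvec m (k : ℤ) ⊗ₜ[Fv] uvec n ((p : ℤ) - k))) :
    (TensorProduct.map (Eop m) (LinearMap.id : Vm n →ₗ[Fv] Vm n) + TensorProduct.map (Kop m) (Eop n)) Φ = 0 ∧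
      TensorProduct.map (Kop m) (Kop n) Φ = vv ^ ((m : ℤ) + n - 2 * p) • Φ := by
  subst hΦ
  constructor
  · rw [LinearMap.add_apply, map_sum, map_sum]
    simp only [map_smul, TensorProduct.map_tmul, LinearMap.id_coe, id_eq,
      Eop_uvec, Kop_uvec, TensorProduct.smul_tmul', TensorProduct.tmul_smul, smul_smul]
    rw [Finset.sum_range_succ' _ p, Finset.sum_range_succ]
    rw [show uvec m (((0:ℕ):ℤ) - 1) = 0 from uvec_eq_zero (by simp),
      smul_zero, TensorProduct.zero_tmul, add_zero,
      show uvec n ((p:ℤ) - (p:ℕ) - 1) = 0 from uvec_eq_zero (by omega),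
      TensorProduct.tmul_zero, add_zero, ← Finset.sum_add_distrib]
    apply Finset.sum_eq_zero
    intro k hk
    simp only [Finset.mem_range] at hk
    have hpm : p ≤ m := le_trans hp (min_le_left m n)
    have hpn : p ≤ n := le_trans hp (min_le_right m n)
    have e1 : ((k+1:ℕ):ℤ) - 1 = (k:ℤ) := by push_cast; ring
    have e2 : (p:ℤ) - ((k+1:ℕ):ℤ) = (p:ℤ) - k - 1 := by push_cast; ring
    rw [e1, e2, ← TensorProduct.add_tmul, ← add_smul]
    have hkey : ((-1:Fv) ^ (k+1) * vv ^ ((((k+1:ℕ):ℤ) - p) * ((m:ℤ) - p - ((k+1:ℕ):ℤ) + 1)) *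
          (qfall ((n:ℤ) - p + ((k+1:ℕ):ℤ)) (k+1) / qfall (m:ℤ) (k+1)) * qint ((m:ℤ) + 1 - ((k+1:ℕ):ℤ))
        + qint ((n:ℤ) + 1 - ((p:ℤ) - k)) *
          ((-1) ^ k * vv ^ (((k:ℤ) - p) * ((m:ℤ) - p - k + 1)) *
            (qfall ((n:ℤ) - p + k) k / qfall (m:ℤ) k) * vv ^ ((m:ℤ) - 2 * k))) = 0 := by
      have hQ : qint ((m:ℤ) - k) ≠ 0 := qint_ne_zero_s15 (by omega)
      push_cast
      rw [show ((k:ℤ)+1-p)*((m:ℤ)-p-((k:ℤ)+1)+1) = ((k:ℤ)-p)*((m:ℤ)-p-k+1) + ((m:ℤ)-2*k) from by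
        ring, zpow_add₀ vv_ne_zero]
      rw [show (n:ℤ)-p+((k:ℤ)+1) = ((n:ℤ)-p+k)+1 from by ring, qfall_succ' _ k,
        show (n:ℤ)-p+(k:ℤ)+1-1 = (n:ℤ)-p+k from by ring, qfall_succ (m:ℤ) k,
        show (m:ℤ)+1-((k:ℤ)+1) = (m:ℤ)-k from by ring,
        show (n:ℤ)+1-((p:ℤ)-k) = (n:ℤ)-p+(k:ℤ)+1 from by ring]
      by_cases hB : qfall (m:ℤ) k = 0
      · simp [hB]
      · field_simp
        ring
    rw [hkey, zero_smul, TensorProduct.zero_tmul]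
  · rw [map_sum, Finset.smul_sum]
    refine Finset.sum_congr rfl fun k hk => ?_
    rw [map_smul, TensorProduct.map_tmul, Kop_uvec, Kop_uvec]
    simp only [TensorProduct.smul_tmul', TensorProduct.tmul_smul, smul_smul]
    congr 1
    have hz : vv^((m:ℤ)-2*(k:ℤ)) * vv^((n:ℤ)-2*((p:ℤ)-k)) = vv^((m:ℤ)+n-2*p) := by
      rw [← zpow_add₀ vv_ne_zero]; congr 1; ring
    rw [← hz]; ring_nf
end
end
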